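/- Let D be a DTMC, R ⊆ S × S, and s1 R s2 such that there exists s1' ∈ post(s1) with (s1',s2) ∉ R and s2' ∈ post(s2) with (s1,s2') ∉ R. Then s1 ≾_R s2 (s2 weakly simulates s1 up to R) if and only if there exists γ > 0 and a flow f on the parametric network N(γ) = N(P(s1,·), γ·P(s2,·), R) that saturates all edges 𝓈→u1 for u1 ∈ MU1 and all edges ū2→𝓉 for u2 ∈ MU2, where MU1 = post(s1) \ R⁻¹(s2) and MU2 = post(s2) \ R(s1). -/

import Mathlib

open Finset
open scoped Classical ENNReal

/-- Vertices of the bipartite network `N(μ, μ', R)`: a source `src`, a sink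
`snk`, left copies `lft s` of states and right copies `rgt t` of states. -/
abbrev Vert (S : Type*) := (Bool × S) ⊕ Bool

variable {S : Type*} [Fintype S]

def src {S : Type*} : Vert S := Sum.inr false
def snk {S : Type*} : Vert S := Sum.inr true
def lft {S : Type*} (s : S) : Vert S := Sum.inl (false, s)
def rgt {S : Type*} (t : S) : Vert S := Sum.inl (true, t)

/-- Capacities of `N(μ, μ', R)`: `μ(s)` on `src → lft s`, `μ'(t)` on
`rgt t → snk`, infinite capacity on `lft s → rgt t` whenever `(s,t) ∈ R`,
and `0` (no edge) otherwise. -/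
noncomputable def cap (μ μ' : S → ℝ) (R : Set (S × S)) : Vert S → Vert S → ℝ≥0∞ :=
  fun v w =>
    match v, w with
    | Sum.inr false, Sum.inl (false, s) => ENNReal.ofReal (μ s)
    | Sum.inl (true, t), Sum.inr true => ENNReal.ofReal (μ' t)
    | Sum.inl (false, s), Sum.inl (true, t) => if (s, t) ∈ R then ⊤ else 0
    | _, _ => 0

/-- `f` is a flow on the network with capacities `c`: capacity constraints,
antisymmetry, and conservation at every internal vertex. -/
def IsFlow (c : Vert S → Vert S → ℝ≥0∞) (f : Vert S → Vert S → ℝ) : Prop :=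
  (∀ v w, ENNReal.ofReal (f v w) ≤ c v w) ∧
  (∀ v w, f v w = - f w v) ∧
  (∀ v : Vert S, v ≠ src → v ≠ snk → (∑ u, f u v) = 0)

/-- The value of a flow: the net outflow of the source. -/
def flowValue (f : Vert S → Vert S → ℝ) : ℝ := ∑ w, f src w

variable {AP : Type*}

/-- A path fragment `a, w₁, …, wₙ, b` with positive probability. -/
def PathPos (P : S → S → ℝ) : S → List S → S → Prop
  | a, [], b => 0 < P a b
  | a, w :: ws, b => 0 < P a w ∧ PathPos P w ws b

/-- `s₂` weakly simulates `s₁` up to `R` in the DTMC `(S, P, L)`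
(Definition 2.14 of the paper, with `δᵢ : S → [0,1]`,
`Uᵢ = {u ∈ post(sᵢ) | δᵢ(u) > 0}`, `Vᵢ = {v ∈ post(sᵢ) | δᵢ(v) < 1}` and
`Kᵢ = Σ_{u} δᵢ(u)·P(sᵢ,u)`). -/
def WeakSimUpTo (P : S → S → ℝ) (L : S → Set AP) (R : Set (S × S))
    (s₁ s₂ : S) : Prop :=
  L s₁ = L s₂ ∧
  ∃ δ₁ δ₂ : S → ℝ,
    (∀ u, 0 ≤ δ₁ u ∧ δ₁ u ≤ 1) ∧ (∀ u, 0 ≤ δ₂ u ∧ δ₂ u ≤ 1) ∧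
    -- (1) stutter steps respect the relation
    (∀ v, 0 < P s₁ v → δ₁ v < 1 → (v, s₂) ∈ R) ∧
    (∀ v, 0 < P s₂ v → δ₂ v < 1 → (s₁, v) ∈ R) ∧
    -- (2) weight function condition on the visible parts
    (∃ Δ : S → S → ℝ,
      (∀ u v, 0 ≤ Δ u v ∧ Δ u v ≤ 1) ∧
      (∀ u v, 0 < Δ u v →
        (0 < P s₁ u ∧ 0 < δ₁ u) ∧ (0 < P s₂ v ∧ 0 < δ₂ v) ∧ (u, v) ∈ R) ∧
      (0 < (∑ u, δ₁ u * P s₁ u) → 0 < (∑ u, δ₂ u * P s₂ u) →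
        ∀ w, (∑ u, δ₁ u * P s₁ u) * (∑ v, Δ w v) = P s₁ w * δ₁ w ∧
             (∑ u, δ₂ u * P s₂ u) * (∑ v, Δ v w) = P s₂ w * δ₂ w)) ∧
    -- (3) reachability condition
    (∀ u₁, 0 < P s₁ u₁ → 0 < δ₁ u₁ →
      ∃ (ws : List S) (u₂ : S), PathPos P s₂ ws u₂ ∧
        (∀ w ∈ ws, (s₁, w) ∈ R) ∧ (u₁, u₂) ∈ R)

/-!
The functions `δ₁ P(s₁,·)` and `δ₂ P(s₂,·)` of a weak simulation are the parts of the two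
distributions that leave the `R`-class visibly, and the weight function `Δ`, scaled by `K₁`, is
a flow in `N(γ)` for `γ = K₁ / K₂` carrying the first onto `γ` times the second. Condition (1)
forces `δᵢ = 1` on the successors that must move visibly (`MU1`, `MU2`), which is exactly
saturation of their edges. Conversely, a flow `f` yields `δ₁ u = f(𝓈,u) / P(s₁,u)`,
`δ₂ v = f(v̄,𝓉) / (γ P(s₂,v))` and `Δ = f / F` with `F` the value of `f`; saturation gives
(1), and any edge `u → v̄` carrying flow is a one-step witness for the reachability condition (3).
-/

noncomputable def ratioOrOne {ι : Type*} (a p : ι → ℝ) (i : ι) : ℝ :=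
  if 0 < p i then a i / p i else 1

section ratioOrOne

variable {ι : Type*} {a p : ι → ℝ} {i : ι}

lemma ratioOrOne_mem_Icc (h0 : 0 ≤ a i) (hle : a i ≤ p i) :
    ratioOrOne a p i ∈ Set.Icc 0 1 := by
  unfold ratioOrOne
  split_ifs with hp
  · exact ⟨div_nonneg h0 hp.le, div_le_one_of_le₀ hle hp.le⟩
  · exact ⟨zero_le_one, le_rfl⟩

lemma ratioOrOne_mul (h0 : 0 ≤ a i) (hle : a i ≤ p i) : ratioOrOne a p i * p i = a i := by
  unfold ratioOrOne
  split_ifs with hp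
  · exact div_mul_cancel₀ _ hp.ne'
  · have hp0 : p i = 0 := by linarith
    rw [hp0, mul_zero]
    linarith

lemma ratioOrOne_pos_iff (hp : 0 < p i) : 0 < ratioOrOne a p i ↔ 0 < a i := by
  simp only [ratioOrOne, if_pos hp, div_pos_iff_of_pos_right hp]

lemma ratioOrOne_eq_one (hp : 0 < p i) (h : a i = p i) : ratioOrOne a p i = 1 := by
  simp only [ratioOrOne, if_pos hp, h, div_self hp.ne']

end ratioOrOne

lemma sum_vert (h : Vert S → ℝ) :
    ∑ v, h v = ∑ s, h (lft s) + ∑ s, h (rgt s) + (h src + h snk) := by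
  rw [Fintype.sum_sum_type, Fintype.sum_prod_type, Fintype.sum_bool, Fintype.sum_bool]
  simp only [lft, rgt, src, snk]
  ring

noncomputable def forwardFlow {S : Type*} (A B : S → ℝ) (C : S → S → ℝ) :
    Vert S → Vert S → ℝ
  | Sum.inr false, Sum.inl (false, u) => A u
  | Sum.inl (false, u), Sum.inl (true, t) => C u t
  | Sum.inl (true, t), Sum.inr true => B t
  | _, _ => 0

noncomputable def bipartiteFlow {S : Type*} (A B : S → ℝ) (C : S → S → ℝ)
    (v w : Vert S) : ℝ :=
  forwardFlow A B C v w - forwardFlow A B C w v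

section bipartiteFlow

variable {S : Type*} (A B : S → ℝ) (C : S → S → ℝ)

@[simp] lemma bipartiteFlow_src_lft (u : S) : bipartiteFlow A B C src (lft u) = A u := by
  simp [bipartiteFlow, forwardFlow, src, lft]

@[simp] lemma bipartiteFlow_rgt_snk (t : S) : bipartiteFlow A B C (rgt t) snk = B t := by
  simp [bipartiteFlow, forwardFlow, snk, rgt]

end bipartiteFlow

lemma isFlow_bipartiteFlow {μ μ' : S → ℝ} {R : Set (S × S)} {A B : S → ℝ} {C : S → S → ℝ}
    (hA0 : ∀ u, 0 ≤ A u) (hB0 : ∀ t, 0 ≤ B t) (hC0 : ∀ u t, 0 ≤ C u t)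
    (hA : ∀ u, A u ≤ μ u) (hB : ∀ t, B t ≤ μ' t) (hCR : ∀ u t, 0 < C u t → (u, t) ∈ R)
    (hrow : ∀ u, ∑ t, C u t = A u) (hcol : ∀ t, ∑ u, C u t = B t) :
    IsFlow (cap μ μ' R) (bipartiteFlow A B C) := by
  refine ⟨?_, fun v w => (neg_sub _ _).symm, ?_⟩
  · rintro (⟨_ | _, s⟩ | _ | _) (⟨_ | _, t⟩ | _ | _) <;>
      simp only [bipartiteFlow, forwardFlow, cap, sub_zero, zero_sub, sub_self,
        le_refl, ENNReal.ofReal_of_nonpos, neg_nonpos, hA0 _, hB0 _,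
        hC0 _ _, ENNReal.ofReal_le_ofReal (hA _), ENNReal.ofReal_le_ofReal (hB _)]
    split_ifs with h
    · exact le_top
    · simpa using not_lt.mp (mt (hCR s t) h)
  · rintro (⟨_ | _, w⟩ | _ | _) hsrc hsnk
    · simp only [bipartiteFlow, Finset.sum_sub_distrib]
      rw [sum_vert, sum_vert]
      simp [forwardFlow, lft, rgt, src, snk, hrow]
    · simp only [bipartiteFlow, Finset.sum_sub_distrib]
      rw [sum_vert, sum_vert]
      simp [forwardFlow, lft, rgt, src, snk, hcol]
    · exact absurd rfl hsrc
    · exact absurd rfl hsnk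

namespace IsFlow

section general

variable {c : Vert S → Vert S → ℝ≥0∞} {f : Vert S → Vert S → ℝ} (hf : IsFlow c f)
include hf

lemma nonneg_of_cap_eq_zero {v w : Vert S} (h : c w v = 0) : 0 ≤ f v w := by
  have hwv : f w v ≤ 0 := ENNReal.ofReal_eq_zero.mp (le_zero_iff.mp (h ▸ hf.1 w v))
  linarith [hf.2.1 v w]

lemma eq_zero_of_cap_eq_zero {v w : Vert S} (hvw : c v w = 0) (hwv : c w v = 0) :
    f v w = 0 := by
  linarith [hf.nonneg_of_cap_eq_zero hwv, hf.nonneg_of_cap_eq_zero hvw, hf.2.1 v w]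

lemma le_of_cap_eq_ofReal {v w : Vert S} {x : ℝ} (h : c v w = ENNReal.ofReal x) (hx : 0 ≤ x) :
    f v w ≤ x :=
  (ENNReal.ofReal_le_ofReal_iff hx).mp (h ▸ hf.1 v w)

end general

variable {μ μ' : S → ℝ} {R : Set (S × S)} {f : Vert S → Vert S → ℝ}
  (hf : IsFlow (cap μ μ' R) f)
include hf

lemma src_lft_nonneg (u : S) : 0 ≤ f src (lft u) := hf.nonneg_of_cap_eq_zero rfl

lemma lft_rgt_nonneg (u v : S) : 0 ≤ f (lft u) (rgt v) := hf.nonneg_of_cap_eq_zero rfl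

lemma rgt_snk_nonneg (v : S) : 0 ≤ f (rgt v) snk := hf.nonneg_of_cap_eq_zero rfl

lemma src_lft_le {u : S} (hμ : 0 ≤ μ u) : f src (lft u) ≤ μ u := hf.le_of_cap_eq_ofReal rfl hμ

lemma rgt_snk_le {v : S} (hμ' : 0 ≤ μ' v) : f (rgt v) snk ≤ μ' v :=
  hf.le_of_cap_eq_ofReal rfl hμ'

lemma lft_rgt_eq_zero {u v : S} (h : (u, v) ∉ R) : f (lft u) (rgt v) = 0 :=
  le_antisymm (by simpa [cap, lft, rgt, h] using hf.1 (lft u) (rgt v)) (hf.lft_rgt_nonneg u v)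

lemma src_lft_eq_sum (u : S) : f src (lft u) = ∑ v, f (lft u) (rgt v) := by
  have hcons := hf.2.2 (lft u) (by simp [lft, src]) (by simp [lft, snk])
  rw [sum_vert] at hcons
  have hlft : ∑ s, f (lft s) (lft u) = 0 :=
    Finset.sum_eq_zero fun s _ => hf.eq_zero_of_cap_eq_zero rfl rfl
  have hrgt : ∑ s, f (rgt s) (lft u) = -∑ s, f (lft u) (rgt s) := by
    rw [← Finset.sum_neg_distrib]
    exact Finset.sum_congr rfl fun s _ => hf.2.1 _ _
  rw [hlft, hrgt, hf.eq_zero_of_cap_eq_zero (v := snk) rfl rfl] at hcons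
  linarith

lemma rgt_snk_eq_sum (v : S) : f (rgt v) snk = ∑ u, f (lft u) (rgt v) := by
  have hcons := hf.2.2 (rgt v) (by simp [rgt, src]) (by simp [rgt, snk])
  rw [sum_vert] at hcons
  have hrgt : ∑ s, f (rgt s) (rgt v) = 0 :=
    Finset.sum_eq_zero fun s _ => hf.eq_zero_of_cap_eq_zero rfl rfl
  rw [hrgt, hf.eq_zero_of_cap_eq_zero (v := src) rfl rfl, hf.2.1 snk] at hcons
  linarith

lemma flowValue_eq_sum_src_lft : flowValue f = ∑ u, f src (lft u) := by
  rw [flowValue, sum_vert, Finset.sum_eq_zero (s := univ) (f := fun s => f src (rgt s))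
    fun s _ => hf.eq_zero_of_cap_eq_zero rfl rfl, hf.eq_zero_of_cap_eq_zero (w := src) rfl rfl,
    hf.eq_zero_of_cap_eq_zero (w := snk) rfl rfl]
  simp

lemma sum_rgt_snk_eq_flowValue : ∑ v, f (rgt v) snk = flowValue f := by
  simp only [hf.flowValue_eq_sum_src_lft, hf.src_lft_eq_sum, hf.rgt_snk_eq_sum]
  exact Finset.sum_comm

lemma flowValue_nonneg : 0 ≤ flowValue f :=
  hf.flowValue_eq_sum_src_lft ▸ Finset.sum_nonneg fun u _ => hf.src_lft_nonneg u

lemma lft_rgt_le_src_lft (u v : S) : f (lft u) (rgt v) ≤ f src (lft u) :=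
  hf.src_lft_eq_sum u ▸ Finset.single_le_sum (fun t _ => hf.lft_rgt_nonneg u t) (mem_univ v)

lemma lft_rgt_le_rgt_snk (u v : S) : f (lft u) (rgt v) ≤ f (rgt v) snk :=
  hf.rgt_snk_eq_sum v ▸ Finset.single_le_sum (fun t _ => hf.lft_rgt_nonneg t v) (mem_univ u)

lemma src_lft_le_flowValue (u : S) : f src (lft u) ≤ flowValue f :=
  hf.flowValue_eq_sum_src_lft ▸ Finset.single_le_sum (fun t _ => hf.src_lft_nonneg t) (mem_univ u)

lemma exists_lft_rgt_pos {u : S} (h : 0 < f src (lft u)) : ∃ v, 0 < f (lft u) (rgt v) := by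
  rw [hf.src_lft_eq_sum] at h
  by_contra! hneg
  exact h.not_ge (Finset.sum_nonpos fun v _ => hneg v)

end IsFlow

lemma sum_mul_pos_of_eq_one {ι : Type*} [Fintype ι] {δ p : ι → ℝ} (hδ : ∀ i, 0 ≤ δ i)
    (hp : ∀ i, 0 ≤ p i) {i : ι} (hpi : 0 < p i) (hδi : δ i = 1) : 0 < ∑ j, δ j * p j :=
  Finset.sum_pos' (fun j _ => mul_nonneg (hδ j) (hp j)) ⟨i, mem_univ i, by rwa [hδi, one_mul]⟩

section WeakSimulation

variable {P : S → S → ℝ} {L : S → Set AP} {R : Set (S × S)} {s₁ s₂ : S}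

theorem exists_flow_of_weakSimUpTo (hP0 : ∀ s u, 0 ≤ P s u)
    (hvis₁ : ∃ u, 0 < P s₁ u ∧ (u, s₂) ∉ R) (hvis₂ : ∃ u, 0 < P s₂ u ∧ (s₁, u) ∉ R)
    (hsim : WeakSimUpTo P L R s₁ s₂) :
    ∃ γ : ℝ, 0 < γ ∧
      ∃ f, IsFlow (cap (P s₁) (fun u => γ * P s₂ u) R) f ∧
        (∀ u, 0 < P s₁ u → (u, s₂) ∉ R → f src (lft u) = P s₁ u) ∧
        (∀ u, 0 < P s₂ u → (s₁, u) ∉ R → f (rgt u) snk = γ * P s₂ u) := by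
  obtain ⟨-, δ₁, δ₂, hδ₁, hδ₂, hV₁, hV₂, ⟨Δ, hΔ, hΔpos, hΔeq⟩, -⟩ := hsim
  have hvisδ₁ : ∀ u, 0 < P s₁ u → (u, s₂) ∉ R → δ₁ u = 1 := fun u hu hnR =>
    le_antisymm (hδ₁ u).2 (not_lt.mp fun h => hnR (hV₁ u hu h))
  have hvisδ₂ : ∀ u, 0 < P s₂ u → (s₁, u) ∉ R → δ₂ u = 1 := fun u hu hnR =>
    le_antisymm (hδ₂ u).2 (not_lt.mp fun h => hnR (hV₂ u hu h))
  set K₁ := ∑ u, δ₁ u * P s₁ u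
  set K₂ := ∑ u, δ₂ u * P s₂ u
  obtain ⟨u₁, hu₁, hnR₁⟩ := hvis₁
  obtain ⟨u₂, hu₂, hnR₂⟩ := hvis₂
  have hK₁ : 0 < K₁ :=
    sum_mul_pos_of_eq_one (fun u => (hδ₁ u).1) (hP0 s₁) hu₁ (hvisδ₁ u₁ hu₁ hnR₁)
  have hK₂ : 0 < K₂ :=
    sum_mul_pos_of_eq_one (fun u => (hδ₂ u).1) (hP0 s₂) hu₂ (hvisδ₂ u₂ hu₂ hnR₂)
  have hγ : 0 < K₁ / K₂ := div_pos hK₁ hK₂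
  have hweight := hΔeq hK₁ hK₂
  have hflow := isFlow_bipartiteFlow (μ := P s₁) (μ' := fun u => K₁ / K₂ * P s₂ u) (R := R)
    (A := fun u => δ₁ u * P s₁ u) (B := fun t => K₁ / K₂ * (δ₂ t * P s₂ t))
    (C := fun u t => K₁ * Δ u t)
    (fun u => mul_nonneg (hδ₁ u).1 (hP0 s₁ u))
    (fun t => mul_nonneg hγ.le (mul_nonneg (hδ₂ t).1 (hP0 s₂ t)))
    (fun u t => mul_nonneg hK₁.le (hΔ u t).1)
    (fun u => mul_le_of_le_one_left (hP0 s₁ u) (hδ₁ u).2)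
    (fun t => mul_le_mul_of_nonneg_left (mul_le_of_le_one_left (hP0 s₂ t) (hδ₂ t).2) hγ.le)
    (fun u t h => (hΔpos u t (pos_of_mul_pos_right h hK₁.le)).2.2)
    (fun u => by rw [← Finset.mul_sum, (hweight u).1, mul_comm])
    (fun t => by
      rw [← Finset.mul_sum, mul_comm (δ₂ t), ← (hweight t).2]
      field_simp)
  refine ⟨K₁ / K₂, hγ, _, hflow, fun u hu hnR => ?_, fun u hu hnR => ?_⟩
  · simp [hvisδ₁ u hu hnR]
  · simp [hvisδ₂ u hu hnR]

theorem weakSimUpTo_of_flow (hP0 : ∀ s u, 0 ≤ P s u) (hL : L s₁ = L s₂) {γ : ℝ} (hγ : 0 < γ)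
    {f : Vert S → Vert S → ℝ} (hf : IsFlow (cap (P s₁) (fun u => γ * P s₂ u) R) f)
    (hsat₁ : ∀ u, 0 < P s₁ u → (u, s₂) ∉ R → f src (lft u) = P s₁ u)
    (hsat₂ : ∀ u, 0 < P s₂ u → (s₁, u) ∉ R → f (rgt u) snk = γ * P s₂ u) :
    WeakSimUpTo P L R s₁ s₂ := by
  set a₁ : S → ℝ := fun u => f src (lft u)
  set a₂ : S → ℝ := fun v => f (rgt v) snk / γ
  have ha₁ : ∀ u, 0 ≤ a₁ u ∧ a₁ u ≤ P s₁ u := fun u =>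
    ⟨hf.src_lft_nonneg u, hf.src_lft_le (hP0 s₁ u)⟩
  have ha₂ : ∀ v, 0 ≤ a₂ v ∧ a₂ v ≤ P s₂ v := fun v =>
    ⟨div_nonneg (hf.rgt_snk_nonneg v) hγ.le,
      div_le_of_le_mul₀ hγ.le (hP0 s₂ v)
        (by linarith [hf.rgt_snk_le (mul_nonneg hγ.le (hP0 s₂ v))])⟩
  set δ₁ := ratioOrOne a₁ (P s₁)
  set δ₂ := ratioOrOne a₂ (P s₂)
  set F := flowValue f
  have hF : 0 ≤ F := hf.flowValue_nonneg
  have hK₁ : ∑ u, δ₁ u * P s₁ u = F := by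
    simp only [δ₁, ratioOrOne_mul (ha₁ _).1 (ha₁ _).2, hf.flowValue_eq_sum_src_lft, F, a₁]
  have hK₂ : ∑ v, δ₂ v * P s₂ v = F / γ := by
    simp only [δ₂, ratioOrOne_mul (ha₂ _).1 (ha₂ _).2, a₂, ← Finset.sum_div,
      hf.sum_rgt_snk_eq_flowValue, F]
  have hcarrying : ∀ u v, 0 < f (lft u) (rgt v) →
      (0 < P s₁ u ∧ 0 < δ₁ u) ∧ (0 < P s₂ v ∧ 0 < δ₂ v) ∧ (u, v) ∈ R := by
    intro u v h
    have h₁ : 0 < a₁ u := h.trans_le (hf.lft_rgt_le_src_lft u v)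
    have h₂ : 0 < a₂ v := div_pos (h.trans_le (hf.lft_rgt_le_rgt_snk u v)) hγ
    have hP₁ := h₁.trans_le (ha₁ u).2
    have hP₂ := h₂.trans_le (ha₂ v).2
    refine ⟨⟨hP₁, (ratioOrOne_pos_iff hP₁).2 h₁⟩, ⟨hP₂, (ratioOrOne_pos_iff hP₂).2 h₂⟩, ?_⟩
    by_contra hnR
    exact h.ne' (hf.lft_rgt_eq_zero hnR)
  refine ⟨hL, δ₁, δ₂, fun u => ratioOrOne_mem_Icc (ha₁ u).1 (ha₁ u).2,
    fun v => ratioOrOne_mem_Icc (ha₂ v).1 (ha₂ v).2, fun v hv hlt => ?_,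
    fun v hv hlt => ?_, ⟨fun u v => f (lft u) (rgt v) / F, fun u v => ?_, fun u v h => ?_,
    fun hK₁pos _ w => ?_⟩, fun u hu hδ => ?_⟩
  · by_contra hnR
    exact hlt.ne (ratioOrOne_eq_one hv (hsat₁ v hv hnR))
  · by_contra hnR
    refine hlt.ne (ratioOrOne_eq_one hv ?_)
    simp only [a₂, hsat₂ v hv hnR, mul_div_cancel_left₀ _ hγ.ne']
  · exact ⟨div_nonneg (hf.lft_rgt_nonneg u v) hF, div_le_one_of_le₀
      ((hf.lft_rgt_le_src_lft u v).trans (hf.src_lft_le_flowValue u)) hF⟩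
  · exact hcarrying u v (((div_pos_iff.mp h).resolve_right fun h' => h'.2.not_ge hF).1)
  · rw [hK₁] at hK₁pos
    rw [hK₁, hK₂, ← Finset.sum_div, ← Finset.sum_div, ← hf.src_lft_eq_sum,
      ← hf.rgt_snk_eq_sum, mul_comm (P s₁ w), mul_comm (P s₂ w),
      ratioOrOne_mul (ha₁ w).1 (ha₁ w).2, ratioOrOne_mul (ha₂ w).1 (ha₂ w).2]
    constructor <;> simp only [a₁, a₂] <;> field_simp
  · obtain ⟨v, hv⟩ := hf.exists_lft_rgt_pos ((ratioOrOne_pos_iff hu).1 hδ)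
    exact ⟨[], v, (hcarrying u v hv).2.1.1, by simp, (hcarrying u v hv).2.2⟩

end WeakSimulation

theorem weakSimUpTo_iff_valid_gamma_general (P : S → S → ℝ) (L : S → Set AP)
    (hP0 : ∀ s u, 0 ≤ P s u)
    (R : Set (S × S)) (s₁ s₂ : S) (hL : L s₁ = L s₂)
    (hvis₁ : ∃ u, 0 < P s₁ u ∧ (u, s₂) ∉ R)
    (hvis₂ : ∃ u, 0 < P s₂ u ∧ (s₁, u) ∉ R) :
    WeakSimUpTo P L R s₁ s₂ ↔
    ∃ γ : ℝ, 0 < γ ∧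
      ∃ f, IsFlow (cap (P s₁) (fun u => γ * P s₂ u) R) f ∧
        (∀ u, 0 < P s₁ u → (u, s₂) ∉ R → f src (lft u) = P s₁ u) ∧
        (∀ u, 0 < P s₂ u → (s₁, u) ∉ R → f (rgt u) snk = γ * P s₂ u) := by
  refine ⟨exists_flow_of_weakSimUpTo hP0 hvis₁ hvis₂, ?_⟩
  rintro ⟨γ, hγ, f, hf, hsat₁, hsat₂⟩
  exact weakSimUpTo_of_flow hP0 hL hγ hf hsat₁ hsat₂

/-- if `s₁ R s₂` and both states have a visible step
(`MU1 = post(s₁) \ R⁻¹(s₂) ≠ ∅` and `MU2 = post(s₂) \ R(s₁) ≠ ∅`), then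
`s₁ ≾_R s₂` iff for some `γ > 0` there is a flow on the parametric network
`N(γ) = N(P(s₁,·), γ·P(s₂,·), R)` saturating all source edges into `MU1`
and all sink edges from `MU2`. -/
theorem weakSimUpTo_iff_valid_gamma (P : S → S → ℝ) (L : S → Set AP)
    (hP0 : ∀ s u, 0 ≤ P s u)
    (hrows : ∀ s, (∑ u, P s u) = 0 ∨ (∑ u, P s u) = 1)
    (R : Set (S × S)) (s₁ s₂ : S) (hR : (s₁, s₂) ∈ R) (hL : L s₁ = L s₂)
    (hvis₁ : ∃ u, 0 < P s₁ u ∧ (u, s₂) ∉ R)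
    (hvis₂ : ∃ u, 0 < P s₂ u ∧ (s₁, u) ∉ R) :
    WeakSimUpTo P L R s₁ s₂ ↔
    ∃ γ : ℝ, 0 < γ ∧
      ∃ f, IsFlow (cap (P s₁) (fun u => γ * P s₂ u) R) f ∧
        (∀ u, 0 < P s₁ u → (u, s₂) ∉ R → f src (lft u) = P s₁ u) ∧
        (∀ u, 0 < P s₂ u → (s₁, u) ∉ R → f (rgt u) snk = γ * P s₂ u) :=
  weakSimUpTo_iff_valid_gamma_general P L hP0 R s₁ s₂ hL hvis₁ hvis₂
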